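/- arXiv:1704.00604 — 2 statements merged into one kernel-verified Lean document; each statement's English description precedes it below -/
import Mathlib

section
/- There exists C > 0, independent of a, such that for every a > 0, every x ∈ ℝ^N ∖ Λ and every (u,v) ∈ ℝ²: |u⁻ H_u(x,u,v) + v⁻ H_v(x,u,v)| ≤ C A ((u⁻)² + (v⁻)²), where t⁻ = min{t,0}. Moreover, u⁻ Q_u(u,v) + v⁻ Q_v(u,v) = 0 for every (u,v) ∈ ℝ². -/
open MeasureTheory Real Set Filter

noncomputable section

abbrev Euc (N : ℕ) := EuclideanSpace ℝ (Fin N)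

/-- Partial derivative of a two-variable real function in the first variable. -/
def pdU (f : ℝ → ℝ → ℝ) (u v : ℝ) : ℝ := deriv (fun t => f t v) u

/-- Partial derivative of a two-variable real function in the second variable. -/
def pdV (f : ℝ → ℝ → ℝ) (u v : ℝ) : ℝ := deriv (fun t => f u t) v

/-- Integrand of the Gagliardo seminorm. -/
def gagKer (N : ℕ) (s : ℝ) (u : Euc N → ℝ) (z : Euc N × Euc N) : ℝ :=
  (u z.1 - u z.2) ^ 2 / ‖z.1 - z.2‖ ^ ((N : ℝ) + 2 * s)

/-- Squared Gagliardo seminorm `[u]²`. -/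
def gagSq (N : ℕ) (s : ℝ) (u : Euc N → ℝ) : ℝ := ∫ z, gagKer N s u z

/-- Membership in the fractional Sobolev space `H^s(ℝ^N)`. -/
def MemHs (N : ℕ) (s : ℝ) (u : Euc N → ℝ) : Prop :=
  MemLp u 2 (volume : Measure (Euc N)) ∧ Integrable (gagKer N s u)

/-- The nonlinearity `Q` together with assumptions (Q1)-(Q6); `Q` is `C²` on the closed
first quadrant and extended by `0` outside of it.  Its partial derivatives are `pdU Q`,
`pdV Q`. -/
structure QSetup (p : ℝ) : Type where
  Q : ℝ → ℝ → ℝ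
  smooth : ContDiffOn ℝ 2 (fun z : ℝ × ℝ => Q z.1 z.2) (Ici 0 ×ˢ Ici 0)
  ext_zero : ∀ u v : ℝ, u ≤ 0 ∨ v ≤ 0 → Q u v = 0
  q1 : ∀ t : ℝ, 0 < t → ∀ u v : ℝ, 0 ≤ u → 0 ≤ v → Q (t * u) (t * v) = t ^ p * Q u v
  q2 : ∃ C : ℝ, 0 < C ∧ ∀ u v : ℝ, 0 ≤ u → 0 ≤ v →
        |pdU Q u v| + |pdV Q u v| ≤ C * (u ^ (p - 1) + v ^ (p - 1))
  q3 : pdU Q 0 1 = 0 ∧ pdV Q 1 0 = 0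
  q4 : pdU Q 1 0 = 0 ∧ pdV Q 0 1 = 0
  q5 : ∀ u v : ℝ, 0 < u → 0 < v → 0 < Q u v
  q6 : ∀ u v : ℝ, 0 ≤ u → 0 ≤ v → 0 ≤ pdU Q u v ∧ 0 ≤ pdV Q u v

/-- The potentials `V`, `W`, the set `Λ`, the point `x₀` and `ρ₀`, with (H1)-(H3). -/
structure PotSetup (N : ℕ) : Type where
  V : Euc N → ℝ
  W : Euc N → ℝ
  Λ : Set (Euc N)
  x₀ : Euc N
  ρ₀ : ℝ
  contV : Continuous V
  contW : Continuous W
  openΛ : IsOpen Λ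
  bddΛ : Bornology.IsBounded Λ
  x₀mem : x₀ ∈ Λ
  ρ₀pos : 0 < ρ₀
  h1 : ∀ x ∈ frontier Λ, ρ₀ ≤ V x ∧ ρ₀ ≤ W x
  h2 : V x₀ < ρ₀ ∧ W x₀ < ρ₀
  h3 : (∀ x, V x₀ ≤ V x) ∧ (∀ x, W x₀ ≤ W x) ∧ 0 < V x₀ ∧ 0 < W x₀

/-- `‖(u,v)‖²_ξ` for the autonomous problem with frozen potentials `V(ξ)`, `W(ξ)`. -/
def normSqXi {N : ℕ} (s : ℝ) (P : PotSetup N) (ξ : Euc N) (u v : Euc N → ℝ) : ℝ :=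
  gagSq N s u + gagSq N s v + ∫ x, (P.V ξ * u x ^ 2 + P.W ξ * v x ^ 2)

/-- The autonomous energy functional `J_ξ`. -/
def Jxi {N : ℕ} (s : ℝ) {p : ℝ} (QS : QSetup p) (P : PotSetup N) (ξ : Euc N)
    (u v : Euc N → ℝ) : ℝ :=
  (1 / 2) * normSqXi s P ξ u v - ∫ x, QS.Q (u x) (v x)

/-- The Nehari manifold `N_ξ` of the autonomous functional `J_ξ`. -/
def NehariXi {N : ℕ} (s : ℝ) {p : ℝ} (QS : QSetup p) (P : PotSetup N) (ξ : Euc N) :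
    Set ((Euc N → ℝ) × (Euc N → ℝ)) :=
  {w | MemHs N s w.1 ∧ MemHs N s w.2 ∧ w ≠ (0, 0) ∧
    normSqXi s P ξ w.1 w.2 =
      ∫ x, (w.1 x * pdU QS.Q (w.1 x) (w.2 x) + w.2 x * pdV QS.Q (w.1 x) (w.2 x))}

/-- `C(ξ) = inf_{(u,v) ∈ N_ξ} J_ξ(u,v)`. -/
def Cmin {N : ℕ} (s : ℝ) {p : ℝ} (QS : QSetup p) (P : PotSetup N) (ξ : Euc N) : ℝ :=
  sInf ((fun w : (Euc N → ℝ) × (Euc N → ℝ) => Jxi s QS P ξ w.1 w.2) '' NehariXi s QS P ξ)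

/-- The cut-off function `η` used in the penalization, for a given `a > 0`. -/
structure EtaSetup (a cη : ℝ) : Type where
  η : ℝ → ℝ
  smooth : ContDiff ℝ 2 η
  anti : Antitone η
  mem01 : ∀ t, η t ∈ Icc (0 : ℝ) 1
  eq_one : ∀ t, t ≤ a → η t = 1
  eq_zero : ∀ t, 5 * a ≤ t → η t = 0
  bd1 : ∀ t, |deriv η t| ≤ cη / a
  bd2 : ∀ t, |deriv (deriv η) t| ≤ cη / a ^ 2

/-- `A = max { Q(u,v)/(u²+v²) : a ≤ √(u²+v²) ≤ 5a }`. -/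
def Aconst {p : ℝ} (QS : QSetup p) (a : ℝ) : ℝ :=
  sSup ((fun z : ℝ × ℝ => QS.Q z.1 z.2 / (z.1 ^ 2 + z.2 ^ 2)) ''
    {z : ℝ × ℝ | a ≤ Real.sqrt (z.1 ^ 2 + z.2 ^ 2) ∧ Real.sqrt (z.1 ^ 2 + z.2 ^ 2) ≤ 5 * a})

/-- The penalized nonlinearity `Q̂`. -/
def Qhat {p : ℝ} (QS : QSetup p) (η : ℝ → ℝ) (A u v : ℝ) : ℝ :=
  η (Real.sqrt (u ^ 2 + v ^ 2)) * QS.Q u v +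
    (1 - η (Real.sqrt (u ^ 2 + v ^ 2))) * (A * (u ^ 2 + v ^ 2))

/-- The penalized function `H(x,u,v) = χ_Λ(x) Q(u,v) + (1-χ_Λ(x)) Q̂(u,v)`. -/
def Hpen {N : ℕ} {p : ℝ} (QS : QSetup p) (η : ℝ → ℝ) (A : ℝ) (Λ : Set (Euc N))
    (x : Euc N) (u v : ℝ) : ℝ :=
  Λ.indicator (fun _ => (1 : ℝ)) x * QS.Q u v +
    (1 - Λ.indicator (fun _ => (1 : ℝ)) x) * Qhat QS η A u v

/-- `H_u`. -/
def HpenU {N : ℕ} {p : ℝ} (QS : QSetup p) (η : ℝ → ℝ) (A : ℝ) (Λ : Set (Euc N))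
    (x : Euc N) (u v : ℝ) : ℝ := pdU (Hpen QS η A Λ x) u v

/-- `H_v`. -/
def HpenV {N : ℕ} {p : ℝ} (QS : QSetup p) (η : ℝ → ℝ) (A : ℝ) (Λ : Set (Euc N))
    (x : Euc N) (u v : ℝ) : ℝ := pdV (Hpen QS η A Λ x) u v

/-- `H_uu`. -/
def HpenUU {N : ℕ} {p : ℝ} (QS : QSetup p) (η : ℝ → ℝ) (A : ℝ) (Λ : Set (Euc N))
    (x : Euc N) (u v : ℝ) : ℝ := pdU (HpenU QS η A Λ x) u v

/-- `H_uv`. -/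
def HpenUV {N : ℕ} {p : ℝ} (QS : QSetup p) (η : ℝ → ℝ) (A : ℝ) (Λ : Set (Euc N))
    (x : Euc N) (u v : ℝ) : ℝ := pdV (HpenU QS η A Λ x) u v

/-- `H_vv`. -/
def HpenVV {N : ℕ} {p : ℝ} (QS : QSetup p) (η : ℝ → ℝ) (A : ℝ) (Λ : Set (Euc N))
    (x : Euc N) (u v : ℝ) : ℝ := pdV (HpenV QS η A Λ x) u v

/-- `‖(u,v)‖²_ε`. -/
def normSqE {N : ℕ} (s : ℝ) (P : PotSetup N) (ε : ℝ) (u v : Euc N → ℝ) : ℝ :=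
  gagSq N s u + gagSq N s v + ∫ x, (P.V (ε • x) * u x ^ 2 + P.W (ε • x) * v x ^ 2)

/-- Membership in the space `X_ε`. -/
def MemXe {N : ℕ} (s : ℝ) (P : PotSetup N) (ε : ℝ) (u v : Euc N → ℝ) : Prop :=
  MemHs N s u ∧ MemHs N s v ∧
    Integrable (fun x => P.V (ε • x) * u x ^ 2 + P.W (ε • x) * v x ^ 2)

/-- The penalized energy functional `J_ε`. -/
def Je {N : ℕ} (s : ℝ) {p : ℝ} (QS : QSetup p) (η : ℝ → ℝ) (A : ℝ) (P : PotSetup N)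
    (ε : ℝ) (u v : Euc N → ℝ) : ℝ :=
  (1 / 2) * normSqE s P ε u v - ∫ x, Hpen QS η A P.Λ (ε • x) (u x) (v x)

/-- The pairing `⟨J'_ε(u,v),(φ,ψ)⟩`. -/
def pairJe {N : ℕ} (s : ℝ) {p : ℝ} (QS : QSetup p) (η : ℝ → ℝ) (A : ℝ) (P : PotSetup N)
    (ε : ℝ) (u v φ ψ : Euc N → ℝ) : ℝ :=
  (∫ z : Euc N × Euc N, (u z.1 - u z.2) * (φ z.1 - φ z.2) / ‖z.1 - z.2‖ ^ ((N : ℝ) + 2 * s)) +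
  (∫ z : Euc N × Euc N, (v z.1 - v z.2) * (ψ z.1 - ψ z.2) / ‖z.1 - z.2‖ ^ ((N : ℝ) + 2 * s)) +
  (∫ x, (P.V (ε • x) * u x * φ x + P.W (ε • x) * v x * ψ x)) -
  (∫ x, (φ x * HpenU QS η A P.Λ (ε • x) (u x) (v x) +
         ψ x * HpenV QS η A P.Λ (ε • x) (u x) (v x)))

/-- The Nehari manifold `N_ε` of the penalized functional `J_ε`. -/
def NehariE {N : ℕ} (s : ℝ) {p : ℝ} (QS : QSetup p) (η : ℝ → ℝ) (A : ℝ) (P : PotSetup N)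
    (ε : ℝ) : Set ((Euc N → ℝ) × (Euc N → ℝ)) :=
  {w | MemXe s P ε w.1 w.2 ∧ w ≠ (0, 0) ∧
    normSqE s P ε w.1 w.2 =
      ∫ x, (w.1 x * HpenU QS η A P.Λ (ε • x) (w.1 x) (w.2 x) +
            w.2 x * HpenV QS η A P.Λ (ε • x) (w.1 x) (w.2 x))}

end

/-! Near a point with `u < 0` the function `Q` vanishes identically, so `u⁻ Q_u = 0`; and
outside `Λ` there `H = Q̂ = (1 - η(r)) A r²` with `r = √(u² + v²)`. Hence
`u H_u = A u² (2 (1 - η(r)) - r η'(r))`, where `|r η'(r)| ≤ 5 c_η` because `η'` vanishes for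
`r ≥ 5a` and is bounded by `c_η / a` below. This gives the bound with `C = 5 c_η + 2`, since
`A ≥ 0` (the quotient at `(a, 0)` is `0`). -/

open Topology

namespace QSetup

variable {p : ℝ} (QS : QSetup p)

theorem pdU_eq_zero_of_neg {u : ℝ} (v : ℝ) (hu : u < 0) : pdU QS.Q u v = 0 := by
  have h : (fun t => QS.Q t v) =ᶠ[𝓝 u] fun _ => 0 := by
    filter_upwards [Iio_mem_nhds hu] with t ht using QS.ext_zero t v (Or.inl ht.le)
  rw [pdU, h.deriv_eq, deriv_const]

theorem pdV_eq_zero_of_neg (u : ℝ) {v : ℝ} (hv : v < 0) : pdV QS.Q u v = 0 := by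
  have h : (fun t => QS.Q u t) =ᶠ[𝓝 v] fun _ => 0 := by
    filter_upwards [Iio_mem_nhds hv] with t ht using QS.ext_zero u t (Or.inr ht.le)
  rw [pdV, h.deriv_eq, deriv_const]

theorem min_mul_pdU_eq_zero (u v : ℝ) : min u 0 * pdU QS.Q u v = 0 := by
  rcases le_or_gt 0 u with hu | hu
  · rw [min_eq_right hu, zero_mul]
  · rw [QS.pdU_eq_zero_of_neg v hu, mul_zero]

theorem min_mul_pdV_eq_zero (u v : ℝ) : min v 0 * pdV QS.Q u v = 0 := by
  rcases le_or_gt 0 v with hv | hv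
  · rw [min_eq_right hv, zero_mul]
  · rw [QS.pdV_eq_zero_of_neg u hv, mul_zero]

theorem continuous : Continuous fun z : ℝ × ℝ => QS.Q z.1 z.2 := by
  have hquad : IsClosed (Ici (0 : ℝ) ×ˢ Ici (0 : ℝ)) := isClosed_Ici.prod isClosed_Ici
  have hrest : IsClosed {z : ℝ × ℝ | z.1 ≤ 0 ∨ z.2 ≤ 0} :=
    (isClosed_le continuous_fst continuous_const).union
      (isClosed_le continuous_snd continuous_const)
  have hzero : ContinuousOn (fun z : ℝ × ℝ => QS.Q z.1 z.2) {z | z.1 ≤ 0 ∨ z.2 ≤ 0} :=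
    continuousOn_const.congr fun z hz => QS.ext_zero z.1 z.2 hz
  rw [← continuousOn_univ]
  refine (QS.smooth.continuousOn.union_of_isClosed hzero hquad hrest).mono fun z _ => ?_
  by_cases h : 0 ≤ z.1 ∧ 0 ≤ z.2
  · exact Or.inl h
  · right; simp only [not_and_or, not_le] at h; exact h.imp le_of_lt le_of_lt

end QSetup

theorem isCompact_annulus {r R : ℝ} :
    IsCompact {z : ℝ × ℝ | r ≤ √(z.1 ^ 2 + z.2 ^ 2) ∧ √(z.1 ^ 2 + z.2 ^ 2) ≤ R} := by
  have hsqrt : Continuous fun z : ℝ × ℝ => √(z.1 ^ 2 + z.2 ^ 2) := by fun_prop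
  refine Metric.isCompact_of_isClosed_isBounded
    ((isClosed_le continuous_const hsqrt).inter (isClosed_le hsqrt continuous_const))
    ((Metric.isBounded_closedBall (x := 0) (r := R)).subset fun z hz => ?_)
  rw [Metric.mem_closedBall, dist_zero_right, Prod.norm_def, Real.norm_eq_abs, Real.norm_eq_abs]
  have h1 : |z.1| ≤ √(z.1 ^ 2 + z.2 ^ 2) := Real.abs_le_sqrt (by nlinarith)
  have h2 : |z.2| ≤ √(z.1 ^ 2 + z.2 ^ 2) := Real.abs_le_sqrt (by nlinarith)
  exact (max_le h1 h2).trans hz.2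

theorem Aconst_nonneg {p : ℝ} (QS : QSetup p) {a : ℝ} (ha : 0 < a) : 0 ≤ Aconst QS a := by
  set K := {z : ℝ × ℝ | a ≤ √(z.1 ^ 2 + z.2 ^ 2) ∧ √(z.1 ^ 2 + z.2 ^ 2) ≤ 5 * a}
  have hden : ∀ z ∈ K, z.1 ^ 2 + z.2 ^ 2 ≠ 0 := fun z hz h0 => by
    have := hz.1; rw [h0, Real.sqrt_zero] at this; linarith
  have hbdd : BddAbove ((fun z : ℝ × ℝ => QS.Q z.1 z.2 / (z.1 ^ 2 + z.2 ^ 2)) '' K) :=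
    isCompact_annulus.bddAbove_image
      (QS.continuous.continuousOn.div (by fun_prop) hden)
  have hzero : (a, 0) ∈ K := by
    simp only [K, mem_ofPred_eq, ne_eq, OfNat.ofNat_ne_zero, not_false_eq_true, zero_pow,
      add_zero, Real.sqrt_sq ha.le]
    constructor <;> linarith
  refine le_csSup hbdd ⟨(a, 0), hzero, ?_⟩
  simp [QS.ext_zero a 0 (Or.inr le_rfl)]

namespace EtaSetup

variable {a cη : ℝ} (E : EtaSetup a cη)

theorem abs_mul_deriv_le (ha : 0 < a) {r : ℝ} (hr : 0 ≤ r) : |r * deriv E.η r| ≤ 5 * cη := by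
  have hcη : 0 ≤ cη := by
    have h := (abs_nonneg _).trans (E.bd1 0)
    rwa [le_div_iff₀ ha, zero_mul] at h
  rcases le_or_gt r (5 * a) with h | h
  · calc |r * deriv E.η r| = r * |deriv E.η r| := by rw [abs_mul, abs_of_nonneg hr]
      _ ≤ 5 * a * (cη / a) := mul_le_mul h (E.bd1 r) (abs_nonneg _) (by positivity)
      _ = 5 * cη := by field_simp
  · have hη : E.η =ᶠ[𝓝 r] fun _ => 0 := by
      filter_upwards [Ioi_mem_nhds h] with t ht using E.eq_zero t ht.le
    rw [hη.deriv_eq, deriv_const, mul_zero, abs_zero]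
    positivity

theorem abs_two_mul_one_sub_sub_le (ha : 0 < a) {r : ℝ} (hr : 0 ≤ r) :
    |2 * (1 - E.η r) - r * deriv E.η r| ≤ 5 * cη + 2 := by
  have h01 := E.mem01 r
  have h := E.abs_mul_deriv_le ha hr
  rw [abs_le] at h ⊢
  constructor <;> linarith [h01.1, h01.2]

end EtaSetup

/-- Where `u < 0` (resp. `v < 0`) the function `Q` vanishes, so near such a point `Q̂` is this
function of `u` with `c = v²` (resp. of `v` with `c = u²`). -/
noncomputable def quadPenalty (η : ℝ → ℝ) (A c t : ℝ) : ℝ :=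
  (1 - η √(t ^ 2 + c)) * (A * (t ^ 2 + c))

theorem hasDerivAt_quadPenalty {η : ℝ → ℝ} (hη : Differentiable ℝ η) (A : ℝ) {c t : ℝ}
    (hc : 0 ≤ c) (ht : t ≠ 0) :
    HasDerivAt (quadPenalty η A c)
      (A * t * (2 * (1 - η √(t ^ 2 + c)) - √(t ^ 2 + c) * deriv η √(t ^ 2 + c))) t := by
  have hpos : 0 < t ^ 2 + c := by positivity
  have hsq : HasDerivAt (fun t : ℝ => t ^ 2 + c) (2 * t) t := by
    simpa using (hasDerivAt_pow 2 t).add_const c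
  have hr : HasDerivAt (fun t : ℝ => √(t ^ 2 + c)) (t / √(t ^ 2 + c)) t := by
    convert hsq.sqrt hpos.ne' using 1
    field_simp
  have h : HasDerivAt (quadPenalty η A c)
      ((0 - deriv η √(t ^ 2 + c) * (t / √(t ^ 2 + c))) * (A * (t ^ 2 + c)) +
        (1 - η √(t ^ 2 + c)) * (A * (2 * t))) t :=
    ((hasDerivAt_const t 1).sub ((hη _).hasDerivAt.comp t hr)).mul (hsq.const_mul A)
  refine h.congr_deriv ?_
  have hsqrt : √(t ^ 2 + c) ^ 2 = t ^ 2 + c := Real.sq_sqrt hpos.le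
  have hne : √(t ^ 2 + c) ≠ 0 := (Real.sqrt_pos.2 hpos).ne'
  set r := √(t ^ 2 + c)
  rw [← hsqrt]
  field_simp
  ring

theorem EtaSetup.abs_mul_deriv_quadPenalty_le {a cη : ℝ} (E : EtaSetup a cη) (ha : 0 < a)
    {A c : ℝ} (hA : 0 ≤ A) (hc : 0 ≤ c) (t : ℝ) :
    |t * deriv (quadPenalty E.η A c) t| ≤ (5 * cη + 2) * A * t ^ 2 := by
  rcases eq_or_ne t 0 with rfl | ht
  · simp
  rw [(hasDerivAt_quadPenalty (E.smooth.differentiable (by norm_num)) A hc ht).deriv]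
  calc |t * (A * t * (2 * (1 - E.η √(t ^ 2 + c)) - √(t ^ 2 + c) * deriv E.η √(t ^ 2 + c)))|
      = A * t ^ 2 * |2 * (1 - E.η √(t ^ 2 + c)) - √(t ^ 2 + c) * deriv E.η √(t ^ 2 + c)| := by
        rw [← mul_assoc, abs_mul, abs_of_nonneg (by nlinarith [sq_nonneg t])]; ring
    _ ≤ A * t ^ 2 * (5 * cη + 2) := by
        gcongr; exact E.abs_two_mul_one_sub_sub_le ha (Real.sqrt_nonneg _)
    _ = (5 * cη + 2) * A * t ^ 2 := by ring

section Qhat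

variable {p : ℝ} (QS : QSetup p) (η : ℝ → ℝ) (A : ℝ)

theorem pdU_Qhat_of_neg {u : ℝ} (v : ℝ) (hu : u < 0) :
    pdU (Qhat QS η A) u v = deriv (quadPenalty η A (v ^ 2)) u := by
  refine Filter.EventuallyEq.deriv_eq ?_
  filter_upwards [Iio_mem_nhds hu] with t ht
  simp [Qhat, quadPenalty, QS.ext_zero t v (Or.inl ht.le)]

theorem pdV_Qhat_of_neg (u : ℝ) {v : ℝ} (hv : v < 0) :
    pdV (Qhat QS η A) u v = deriv (quadPenalty η A (u ^ 2)) v := by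
  refine Filter.EventuallyEq.deriv_eq ?_
  filter_upwards [Iio_mem_nhds hv] with t ht
  simp [Qhat, quadPenalty, QS.ext_zero u t (Or.inr ht.le), add_comm]

end Qhat

theorem abs_min_mul_pdU_Qhat_le {p : ℝ} (QS : QSetup p) {a cη A : ℝ} (E : EtaSetup a cη)
    (ha : 0 < a) (hA : 0 ≤ A) (u v : ℝ) :
    |min u 0 * pdU (Qhat QS E.η A) u v| ≤ (5 * cη + 2) * A * min u 0 ^ 2 := by
  rcases le_or_gt 0 u with hu | hu
  · simp [min_eq_right hu]
  · rw [min_eq_left hu.le, pdU_Qhat_of_neg QS E.η A v hu]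
    exact E.abs_mul_deriv_quadPenalty_le ha hA (sq_nonneg v) u

theorem abs_min_mul_pdV_Qhat_le {p : ℝ} (QS : QSetup p) {a cη A : ℝ} (E : EtaSetup a cη)
    (ha : 0 < a) (hA : 0 ≤ A) (u v : ℝ) :
    |min v 0 * pdV (Qhat QS E.η A) u v| ≤ (5 * cη + 2) * A * min v 0 ^ 2 := by
  rcases le_or_gt 0 v with hv | hv
  · simp [min_eq_right hv]
  · rw [min_eq_left hv.le, pdV_Qhat_of_neg QS E.η A u hv]
    exact E.abs_mul_deriv_quadPenalty_le ha hA (sq_nonneg u) v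

theorem Hpen_eq_Qhat_of_notMem {N : ℕ} {p : ℝ} (QS : QSetup p) (η : ℝ → ℝ) (A : ℝ) {Λ : Set (Euc N)}
    {x : Euc N} (hx : x ∉ Λ) : Hpen QS η A Λ x = Qhat QS η A := by
  funext u v
  simp [Hpen, indicator_of_notMem hx]

theorem stmt13_general {N : ℕ} (p : ℝ) (QS : QSetup p) (Λ : Set (Euc N)) (cη : ℝ) (hcη : 0 < cη) :
    (∃ C : ℝ, 0 < C ∧ ∀ a : ℝ, 0 < a → ∀ E : EtaSetup a cη, ∀ x ∉ Λ, ∀ u v : ℝ,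
      |min u 0 * HpenU QS E.η (Aconst QS a) Λ x u v +
       min v 0 * HpenV QS E.η (Aconst QS a) Λ x u v| ≤
        C * Aconst QS a * ((min u 0) ^ 2 + (min v 0) ^ 2)) ∧
    (∀ u v : ℝ, min u 0 * pdU QS.Q u v + min v 0 * pdV QS.Q u v = 0) := by
  refine ⟨⟨5 * cη + 2, by positivity, fun a ha E x hx u v => ?_⟩, fun u v => ?_⟩
  · have hA := Aconst_nonneg QS ha
    rw [HpenU, HpenV, Hpen_eq_Qhat_of_notMem QS E.η _ hx, mul_add]
    exact (abs_add_le _ _).trans (add_le_add (abs_min_mul_pdU_Qhat_le QS E ha hA u v)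
      (abs_min_mul_pdV_Qhat_le QS E ha hA u v))
  · rw [QS.min_mul_pdU_eq_zero, QS.min_mul_pdV_eq_zero, add_zero]

/-- `|u⁻ H_u + v⁻ H_v| ≤ C A ((u⁻)² + (v⁻)²)` outside `Λ`, with `C`
independent of `a`; moreover `u⁻ Q_u(u,v) + v⁻ Q_v(u,v) = 0` on `ℝ²`. -/
theorem stmt13 {N : ℕ} (s p : ℝ) (hs : 0 < s ∧ s < 1) (hN : 2 * s < (N : ℝ))
    (hp : 2 < p ∧ p < 2 * (N : ℝ) / ((N : ℝ) - 2 * s))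
    (QS : QSetup p) (Λ : Set (Euc N)) (hΛo : IsOpen Λ) (hΛb : Bornology.IsBounded Λ)
    (cη : ℝ) (hcη : 0 < cη) :
    (∃ C : ℝ, 0 < C ∧ ∀ a : ℝ, 0 < a → ∀ E : EtaSetup a cη, ∀ x ∉ Λ, ∀ u v : ℝ,
      |min u 0 * HpenU QS E.η (Aconst QS a) Λ x u v +
       min v 0 * HpenV QS E.η (Aconst QS a) Λ x u v| ≤
        C * Aconst QS a * ((min u 0) ^ 2 + (min v 0) ^ 2)) ∧
    (∀ u v : ℝ, min u 0 * pdU QS.Q u v + min v 0 * pdV QS.Q u v = 0) :=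
  stmt13_general p QS Λ cη hcη
end

section
/- Let α > 0 and R > 0, and let w : ℝ^N → ℝ be continuous with w(x) → 0 as |x| → ∞ and w > 0 on the closed ball of radius R centered at the origin. Assume that for every x ∈ ℝ^N with |x| > R the function ξ ↦ (2w(x) − w(x+ξ) − w(x−ξ))/|ξ|^{N+2s} is integrable on ℝ^N and ∫_{ℝ^N} (2w(x) − w(x+ξ) − w(x−ξ))/|ξ|^{N+2s} dξ + α w(x) ≥ 0. Then w(x) ≥ 0 for every x ∈ ℝ^N. -/
open MeasureTheory Real Set Filter

open Topology

/-
If `w` took a negative value, then, since `w → 0` at infinity, it would attain a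
negative global minimum at some `x₀`, necessarily outside the ball where `w > 0`. At a global
minimum the integrand `2 w(x₀) - w(x₀ + ξ) - w(x₀ - ξ)` is nonpositive, so the fractional
Laplacian at `x₀` is `≤ 0`, while `α w(x₀) < 0`; this contradicts the supersolution inequality.
-/

theorem Continuous.exists_forall_le_of_tendsto_cocompact {X α : Type*} [TopologicalSpace X]
    [LinearOrder α] [TopologicalSpace α] [ClosedIicTopology α] {f : X → α} {a : α}
    (hf : Continuous f) (hlim : Tendsto f (cocompact X) (𝓝 a)) {z : X} (hz : f z < a) :
    ∃ x₀, ∀ y, f x₀ ≤ f y :=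
  hf.exists_forall_le' z ((hlim.eventually (eventually_gt_nhds hz)).mono fun _ hy => hy.le)

theorem integral_secondDiff_div_norm_rpow_nonpos_of_forall_le {E : Type*}
    [NormedAddCommGroup E] [MeasurableSpace E] (μ : Measure E) (p : ℝ) {w : E → ℝ} {x : E}
    (hmin : ∀ y, w x ≤ w y) :
    ∫ ξ, (2 * w x - w (x + ξ) - w (x - ξ)) / ‖ξ‖ ^ p ∂μ ≤ 0 := by
  refine integral_nonpos fun ξ => div_nonpos_of_nonpos_of_nonneg ?_ (by positivity)
  linarith [hmin (x + ξ), hmin (x - ξ)]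

theorem stmt16_general {N : ℕ} (s : ℝ)
    (α R : ℝ) (hα : 0 < α)
    (w : Euc N → ℝ) (hw : Continuous w)
    (hlim : Tendsto w (Filter.cocompact (Euc N)) (nhds (0 : ℝ)))
    (hpos : ∀ x ∈ Metric.closedBall (0 : Euc N) R, 0 < w x)
    (hsuper : ∀ x : Euc N, R < ‖x‖ →
      Integrable (fun ξ : Euc N =>
        (2 * w x - w (x + ξ) - w (x - ξ)) / ‖ξ‖ ^ ((N : ℝ) + 2 * s)) ∧
      0 ≤ (∫ ξ : Euc N,
        (2 * w x - w (x + ξ) - w (x - ξ)) / ‖ξ‖ ^ ((N : ℝ) + 2 * s)) + α * w x) :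
    ∀ x : Euc N, 0 ≤ w x := by
  intro z
  by_contra! hz
  obtain ⟨x₀, hmin⟩ := hw.exists_forall_le_of_tendsto_cocompact hlim hz
  have hx₀_neg : w x₀ < 0 := (hmin z).trans_lt hz
  have hx₀_far : R < ‖x₀‖ := by
    by_contra! hle
    exact (hpos x₀ (mem_closedBall_zero_iff.2 hle)).not_gt hx₀_neg
  have hlap := integral_secondDiff_div_norm_rpow_nonpos_of_forall_le volume ((N : ℝ) + 2 * s) hmin
  linarith [(hsuper x₀ hx₀_far).2, mul_neg_of_pos_of_neg hα hx₀_neg]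

/-- maximum-principle-type result for fractional supersolutions. -/
theorem stmt16 {N : ℕ} (s : ℝ) (hs : 0 < s ∧ s < 1) (hN : 2 * s < (N : ℝ))
    (α R : ℝ) (hα : 0 < α) (hR : 0 < R)
    (w : Euc N → ℝ) (hw : Continuous w)
    (hlim : Tendsto w (Filter.cocompact (Euc N)) (nhds (0 : ℝ)))
    (hpos : ∀ x ∈ Metric.closedBall (0 : Euc N) R, 0 < w x)
    (hsuper : ∀ x : Euc N, R < ‖x‖ →
      Integrable (fun ξ : Euc N =>
        (2 * w x - w (x + ξ) - w (x - ξ)) / ‖ξ‖ ^ ((N : ℝ) + 2 * s)) ∧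
      0 ≤ (∫ ξ : Euc N,
        (2 * w x - w (x + ξ) - w (x - ξ)) / ‖ξ‖ ^ ((N : ℝ) + 2 * s)) + α * w x) :
    ∀ x : Euc N, 0 ≤ w x :=
  stmt16_general s α R hα w hw hlim hpos hsuper
end
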